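/- arXiv:math/0606297 — 3 statements merged into one kernel-verified Lean document; each statement's English description precedes it below -/
import Mathlib

section
/- Let β > 0 and let {ℓ_n}_{n≥1} be a decreasing sequence of positive reals tending to 0 satisfying condition (Θ). Then for every b > 0, the integral ∫₀^b exp( Σ_{n : ℓ_n^β ≥ t} ℓ_n ) dt is finite if and only if the series Σ_{n=1}^∞ e^{ℓ_1+ℓ_2+⋯+ℓ_n} / n^{1+β} converges. -/
/-! On `(ℓ_{n+1}^β, ℓ_n^β]` the tail sum equals `S_n = ℓ_1 + ⋯ + ℓ_n`, so the integral over
`(0, ℓ_1^β]` is `∑ e^{S_n} (ℓ_n^β - ℓ_{n+1}^β)`, while the rest of `(0, b]` contributes a finite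
amount because the integrand decreases. Summation by parts turns this series into
`∑ (e^{S_{n+1}} - e^{S_n}) ℓ_{n+1}^β = ∑ e^{S_{n+1}} (1 - e^{-ℓ_{n+1}}) ℓ_{n+1}^β`, and under (Θ)
the terms `e^{S_n} (1 - e^{-ℓ_n}) ℓ_n^β` are comparable to `e^{S_n} / n^{1+β}`. -/

open Filter Set

noncomputable section

/-- The circle `C` of circumference 1, i.e. `ℝ/ℤ`. -/
abbrev Circle1 : Type := AddCircle (1 : ℝ)

/-- The open arc of length `L` centered at `u` on the circle. -/
def arcSet (u : Circle1) (L : ℝ) : Set Circle1 :=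
  {x | ∃ r : ℝ, |r| < L / 2 ∧ x = u + (r : Circle1)}

/-- `{ℓ_n}_{n ≥ 1}` is a decreasing sequence of positive reals tending to `0`
with `ℓ 1 ≤ 1/2`.  (The value `ℓ 0` is irrelevant.) -/
structure LengthSeq (ℓ : ℕ → ℝ) : Prop where
  pos : ∀ n, 1 ≤ n → 0 < ℓ n
  anti : ∀ m n, 1 ≤ m → m ≤ n → ℓ n ≤ ℓ m
  tendsto_zero : Filter.Tendsto ℓ Filter.atTop (nhds 0)
  first_le : ℓ 1 ≤ 1 / 2

/-- Condition (Θ): there are `0 < M₀ ≤ M₁ < ∞` with `M₀/n ≤ ℓ n ≤ M₁/n` for all `n ≥ 1`. -/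
def ThetaCond (ℓ : ℕ → ℝ) : Prop :=
  ∃ M₀ M₁ : ℝ, 0 < M₀ ∧ M₀ ≤ M₁ ∧ ∀ n : ℕ, 1 ≤ n → M₀ / n ≤ ℓ n ∧ ℓ n ≤ M₁ / n

/-- `u_n := ∏_{k=1}^n (1 - ℓ_k)`. -/
def partProd (ℓ : ℕ → ℝ) (n : ℕ) : ℝ := ∏ k ∈ Finset.Icc 1 n, (1 - ℓ k)

/-- Convergence of the series `Σ_{n≥1} e^{ℓ_1+⋯+ℓ_n} / n^{1+β}`. -/
def coverSeriesSummable (ℓ : ℕ → ℝ) (β : ℝ) : Prop :=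
  Summable (fun n : ℕ => Real.exp (∑ k ∈ Finset.Icc 1 n, ℓ k) / (n : ℝ) ^ (1 + β))

/-- `β₀ := inf { β : Σ_{n≥1} e^{ℓ_1+⋯+ℓ_n} / n^{1+β} < ∞ }`. -/
def beta0 (ℓ : ℕ → ℝ) : ℝ := sInf {β : ℝ | coverSeriesSummable ℓ β}

/-- The set of points of the circle covered by infinitely many of the arcs with centers
`c n` and lengths `ℓ n`, `n ≥ 1`; this is `E = limsup_n I_n`. -/
def limsupArcs (ℓ : ℕ → ℝ) (c : ℕ → Circle1) : Set Circle1 :=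
  {x | ∀ N : ℕ, ∃ n : ℕ, N ≤ n ∧ 1 ≤ n ∧ x ∈ arcSet (c n) (ℓ n)}

/-- The Brownian model: the centers `U n` of the arcs perform independent Brownian
motions on the circle (variance `t` at time `t`), each started uniformly. -/
structure BrownianModel (ℓ : ℕ → ℝ) where
  Ω : Type
  [mΩ : MeasurableSpace Ω]
  P : MeasureTheory.Measure Ω
  prob : MeasureTheory.IsProbabilityMeasure P
  U : ℕ → ℝ → Ω → Circle1
  meas : ∀ n t, Measurable (U n t)
  cont : ∀ n ω, Continuous fun t => U n t ω
  indep : ProbabilityTheory.iIndepFun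
      (fun n ω => fun t : ℝ => U n t ω) P
  init : ∀ n, MeasureTheory.Measure.map (U n 0) P = (MeasureTheory.volume : MeasureTheory.Measure Circle1)
  incr : ∀ n s t, 0 ≤ s → s ≤ t →
      MeasureTheory.Measure.map (fun ω => U n t ω - U n s ω) P
        = MeasureTheory.Measure.map (fun x : ℝ => (x : Circle1))
            (ProbabilityTheory.gaussianReal 0 (Real.toNNReal (t - s)))
  indepIncr : ∀ (n : ℕ) (ts : ℕ → ℝ), (∀ i, 0 ≤ ts i) → Monotone ts →
      ProbabilityTheory.iIndepFun
        (fun i : ℕ => if i = 0 then U n (ts 0)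
          else fun ω => U n (ts i) ω - U n (ts (i - 1)) ω) P

/-- The (bad) set `F_t` of points covered by only finitely many arcs at time `t`,
in the Brownian model. -/
def BrownianModel.F {ℓ : ℕ → ℝ} (M : BrownianModel ℓ) (t : ℝ) (ω : M.Ω) : Set Circle1 :=
  (limsupArcs ℓ fun n => M.U n t ω)ᶜ

/-- The Poisson model with parameter `α`: arc `n` is re-centered uniformly at the points of
an independent Poisson process of rate `ℓ n ^ (-α)`; `C n j` is its `j`-th center and
`Y n j` the `j`-th waiting time. -/
structure PoissonModel (ℓ : ℕ → ℝ) (α : ℝ) where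
  Ω : Type
  [mΩ : MeasurableSpace Ω]
  P : MeasureTheory.Measure Ω
  prob : MeasureTheory.IsProbabilityMeasure P
  C : ℕ → ℕ → Ω → Circle1
  Y : ℕ → ℕ → Ω → ℝ
  measC : ∀ n j, Measurable (C n j)
  measY : ∀ n j, Measurable (Y n j)
  distC : ∀ n j, MeasureTheory.Measure.map (C n j) P
      = (MeasureTheory.volume : MeasureTheory.Measure Circle1)
  distY : ∀ n j, MeasureTheory.Measure.map (Y n j) P
      = ProbabilityTheory.expMeasure (ℓ n ^ (-α))
  indep : ProbabilityTheory.iIndepFun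
      (fun i : (ℕ × ℕ) ⊕ (ℕ × ℕ) => Sum.elim
        (fun p (ω : Ω) => (Sum.inl (C p.1 p.2 ω) : Circle1 ⊕ ℝ))
        (fun p (ω : Ω) => (Sum.inr (Y p.1 p.2 ω) : Circle1 ⊕ ℝ)) i) P

/-- `T n j`: the time of the `j`-th update of arc `n` (so `T n 0 = 0`). -/
def PoissonModel.T {ℓ : ℕ → ℝ} {α : ℝ} (M : PoissonModel ℓ α) (n j : ℕ) (ω : M.Ω) : ℝ :=
  ∑ k ∈ Finset.range j, M.Y n k ω

/-- The center of arc `n` at time `t`: `U n t = C n j` for `t ∈ [T n j, T n (j+1))`. -/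
def PoissonModel.U {ℓ : ℕ → ℝ} {α : ℝ} (M : PoissonModel ℓ α) (n : ℕ) (t : ℝ)
    (ω : M.Ω) : Circle1 :=
  M.C n (sInf {j : ℕ | t < M.T n (j + 1) ω}) ω

/-- The (bad) set `F_t` of points covered by only finitely many arcs at time `t`,
in the Poisson model. -/
def PoissonModel.F {ℓ : ℕ → ℝ} {α : ℝ} (M : PoissonModel ℓ α) (t : ℝ) (ω : M.Ω) :
    Set Circle1 :=
  (limsupArcs ℓ fun n => M.U n t ω)ᶜ


/-- `Σ_{n : ℓ_n^β ≥ t} ℓ_n`: the sum of `ℓ n` over the indices `n ≥ 1` with `ℓ n ^ β ≥ t`. -/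
def tailSum (ℓ : ℕ → ℝ) (β t : ℝ) : ℝ :=
  ∑' n : ℕ, if 1 ≤ n ∧ t ≤ ℓ n ^ β then ℓ n else 0

open MeasureTheory Real Asymptotics Finset
open scoped ENNReal Topology

theorem Antitone.hasSum_sub_succ {f : ℕ → ℝ} {l : ℝ} (hf : Antitone f)
    (hlim : Tendsto f atTop (𝓝 l)) : HasSum (fun n => f n - f (n + 1)) (f 0 - l) := by
  rw [hasSum_iff_tendsto_nat_of_nonneg fun n => sub_nonneg.2 (hf n.le_succ)]
  simpa only [sum_range_sub'] using tendsto_const_nhds.sub hlim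

theorem summable_mul_sub_succ_iff_summable_sub_mul_succ {a b : ℕ → ℝ} (ha : Monotone a)
    (ha0 : 0 ≤ a 0) (hb : Antitone b) (hlim : Tendsto b atTop (𝓝 0)) :
    Summable (fun n => a n * (b n - b (n + 1))) ↔
      Summable (fun n => (a (n + 1) - a n) * b (n + 1)) := by
  have hb_nonneg : ∀ n, 0 ≤ b n := hb.le_of_tendsto hlim
  have ha_nonneg : ∀ n, 0 ≤ a n := fun n => ha0.trans (ha n.zero_le)
  have hP : ∀ n, 0 ≤ a n * (b n - b (n + 1)) := fun n =>
    mul_nonneg (ha_nonneg n) (sub_nonneg.2 (hb n.le_succ))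
  have hQ : ∀ n, 0 ≤ (a (n + 1) - a n) * b (n + 1) := fun n =>
    mul_nonneg (sub_nonneg.2 (ha n.le_succ)) (hb_nonneg _)
  have by_parts : ∀ K, ∑ i ∈ range K, a i * (b i - b (i + 1)) + a K * b K =
      ∑ i ∈ range K, (a (i + 1) - a i) * b (i + 1) + a 0 * b 0 := by
    intro K
    induction K with
    | zero => simp
    | succ K ih => rw [sum_range_succ, sum_range_succ]; linear_combination ih
  constructor
  · intro hPs
    -- `b K` telescopes into `∑ n, (b (n + K) - b (n + K + 1))`, and `a` is monotone
    have hab : ∀ K, a K * b K ≤ ∑' n, a n * (b n - b (n + 1)) := fun K => by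
      have htel : HasSum (fun n => a K * (b (n + K) - b (n + 1 + K))) (a K * b K) := by
        simpa [add_right_comm] using
          ((hb.comp_monotone (add_left_mono (a := K))).hasSum_sub_succ
            (hlim.comp (tendsto_add_atTop_nat K))).mul_left (a K)
      calc a K * b K = ∑' n, a K * (b (n + K) - b (n + 1 + K)) := htel.tsum_eq.symm
        _ ≤ ∑' n, a (n + K) * (b (n + K) - b (n + K + 1)) :=
            htel.summable.tsum_le_tsum
              (fun n => by
                rw [add_right_comm]
                exact mul_le_mul_of_nonneg_right (ha (Nat.le_add_left K n))
                  (sub_nonneg.2 (hb (n + K).le_succ)))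
              ((summable_nat_add_iff K).2 hPs)
        _ ≤ ∑' n, a n * (b n - b (n + 1)) :=
            tsum_comp_le_tsum_of_inj hPs hP (add_left_injective K)
    refine summable_of_sum_range_le hQ (c := 2 * ∑' n, a n * (b n - b (n + 1))) fun K => ?_
    linarith [by_parts K, hPs.sum_le_tsum (range K) (fun n _ => hP n), hab K,
      mul_nonneg ha0 (hb_nonneg 0)]
  · intro hQs
    refine summable_of_sum_range_le hP
      (c := ∑' n, (a (n + 1) - a n) * b (n + 1) + a 0 * b 0) fun K => ?_
    linarith [by_parts K, hQs.sum_le_tsum (range K) (fun n _ => hQ n),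
      mul_nonneg (ha_nonneg K) (hb_nonneg K)]

theorem Antitone.iUnion_Ioc_succ {α : Type*} [LinearOrder α] [TopologicalSpace α]
    [OrderTopology α] {c : ℕ → α} {l : α} (hc : Antitone c)
    (hlim : Tendsto c atTop (𝓝 l)) : ⋃ n, Ioc (c (n + 1)) (c n) = Ioc l (c 0) := by
  ext t
  simp only [Set.mem_iUnion, Set.mem_Ioc]
  constructor
  · rintro ⟨n, hlt, hle⟩
    exact ⟨(hc.le_of_tendsto hlim _).trans_lt hlt, hle.trans (hc n.zero_le)⟩
  · rintro ⟨hlt, hle⟩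
    classical
    have hex : ∃ n, c n < t := (hlim.eventually (gt_mem_nhds hlt)).exists
    obtain ⟨n, hn⟩ : ∃ n, Nat.find hex = n + 1 :=
      Nat.exists_eq_succ_of_ne_zero fun h => (h ▸ Nat.find_spec hex).not_ge hle
    have hfind := Nat.find_spec hex
    rw [hn] at hfind
    exact ⟨n, hfind, not_lt.1 (Nat.find_min hex (hn ▸ n.lt_succ_self))⟩

theorem lintegral_Ioc_eq_tsum_of_antitone {c : ℕ → ℝ} {l : ℝ} (hc : Antitone c)
    (hlim : Tendsto c atTop (𝓝 l)) (f : ℝ → ℝ≥0∞) (μ : Measure ℝ) :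
    ∫⁻ t in Set.Ioc l (c 0), f t ∂μ = ∑' n, ∫⁻ t in Set.Ioc (c (n + 1)) (c n), f t ∂μ := by
  rw [← hc.iUnion_Ioc_succ hlim, lintegral_iUnion (fun _ => measurableSet_Ioc)]
  simpa using hc.pairwise_disjoint_on_Ioc_succ

theorem lintegral_Ioc_lt_top_iff_of_antitoneOn {f : ℝ → ℝ} {a b c : ℝ}
    (hf : AntitoneOn f (Set.Ioi a)) (hb : a < b) (hc : a < c) :
    ∫⁻ t in Set.Ioc a b, ENNReal.ofReal (f t) < ⊤ ↔
      ∫⁻ t in Set.Ioc a c, ENNReal.ofReal (f t) < ⊤ := by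
  wlog hcb : c ≤ b generalizing b c
  · exact (this hc hb (le_of_not_ge hcb)).symm
  have hrest : ∫⁻ t in Set.Ioc c b, ENNReal.ofReal (f t) < ⊤ :=
    calc ∫⁻ t in Set.Ioc c b, ENNReal.ofReal (f t)
        ≤ ∫⁻ _ in Set.Ioc c b, ENNReal.ofReal (f c) :=
          setLIntegral_mono measurable_const fun t ht =>
            ENNReal.ofReal_le_ofReal (hf hc (hc.trans ht.1) ht.1.le)
      _ < ⊤ := by simp [ENNReal.mul_lt_top]
  rw [← Set.Ioc_union_Ioc_eq_Ioc hc.le hcb,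
    lintegral_union measurableSet_Ioc (Set.Ioc_disjoint_Ioc_of_le le_rfl), ENNReal.add_lt_top,
    and_iff_left hrest]

theorem tsum_ofReal_lt_top_iff_summable {ι : Type*} {f : ι → ℝ} (hf : ∀ i, 0 ≤ f i) :
    ∑' i, ENNReal.ofReal (f i) < ⊤ ↔ Summable f := by
  refine ⟨fun h => ?_, Summable.tsum_ofReal_lt_top⟩
  simpa [ENNReal.toReal_ofReal (hf _)] using ENNReal.summable_toReal h.ne

theorem Real.isEquivalent_one_sub_exp_neg : (fun x => 1 - exp (-x)) ~[𝓝 0] id := by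
  have h := ((hasDerivAt_exp (-0)).comp 0 (hasDerivAt_neg 0)).const_sub 1 |>.isLittleO
  simp only [Function.comp_apply, neg_zero, exp_zero, sub_self, sub_zero, mul_neg, mul_one,
    neg_neg, smul_eq_mul] at h
  exact h

theorem Real.exp_sub_exp_eq_mul_one_sub_exp_neg (x y : ℝ) :
    exp (x + y) - exp x = exp (x + y) * (1 - exp (-y)) := by
  rw [mul_one_sub, ← exp_add, add_neg_cancel_right]

namespace ThetaCond

variable {ℓ : ℕ → ℝ} (hθ : ThetaCond ℓ)
include hθ

theorem eventually_nonneg : 0 ≤ᶠ[atTop] ℓ := by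
  obtain ⟨M₀, M₁, hM₀, -, hM⟩ := hθ
  filter_upwards [eventually_ge_atTop 1] with n hn
  exact (div_nonneg hM₀.le n.cast_nonneg).trans (hM n hn).1

theorem isTheta_inv : ℓ =Θ[atTop] fun n : ℕ => (n : ℝ)⁻¹ := by
  have hnonneg := hθ.eventually_nonneg
  obtain ⟨M₀, M₁, hM₀, -, hM⟩ := hθ
  have hev : ∀ᶠ n : ℕ in atTop, M₀ / n ≤ ℓ n ∧ ℓ n ≤ M₁ / n := eventually_atTop.2 ⟨1, hM⟩
  refine ⟨IsBigO.of_bound M₁ ?_, IsBigO.of_bound M₀⁻¹ ?_⟩ <;>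
    filter_upwards [hev, hnonneg] with n hn hn0 <;>
    simp only [Real.norm_of_nonneg hn0, norm_inv, Real.norm_natCast]
  · simpa only [div_eq_mul_inv] using hn.2
  · rw [inv_mul_eq_div, le_div_iff₀' hM₀, ← div_eq_mul_inv]
    exact hn.1

theorem tendsto_zero : Tendsto ℓ atTop (𝓝 0) :=
  hθ.isTheta_inv.tendsto_zero_iff.2 (tendsto_inv_atTop_zero.comp tendsto_natCast_atTop_atTop)

theorem summable_iff_coverSeriesSummable (β : ℝ) :
    Summable (fun n => exp (∑ k ∈ Icc 1 n, ℓ k) * ((1 - exp (-ℓ n)) * ℓ n ^ β)) ↔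
      coverSeriesSummable ℓ β := by
  have hexp : (fun n => 1 - exp (-ℓ n)) =Θ[atTop] ℓ :=
    (isEquivalent_one_sub_exp_neg.comp_tendsto hθ.tendsto_zero).isTheta
  have hrpow : (fun n => ℓ n ^ β) =Θ[atTop] fun n : ℕ => (n : ℝ)⁻¹ ^ β :=
    hθ.isTheta_inv.rpow hθ.eventually_nonneg (Eventually.of_forall fun n => by positivity)
  have hfactor : (fun n => (1 - exp (-ℓ n)) * ℓ n ^ β) =Θ[atTop]
      fun n : ℕ => ((n : ℝ) ^ (1 + β))⁻¹ := by
    refine ((hexp.trans hθ.isTheta_inv).mul hrpow).trans_eventuallyEq ?_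
    filter_upwards [eventually_gt_atTop 0] with n hn
    rw [Real.inv_rpow n.cast_nonneg, ← mul_inv, Real.rpow_add (by positivity), Real.rpow_one]
  exact ((isTheta_refl _ _).mul hfactor).summable_iff_nat

end ThetaCond

namespace LengthSeq

variable {ℓ : ℕ → ℝ} (hℓ : LengthSeq ℓ) {β : ℝ}
include hℓ

theorem rpow_le_rpow_of_le (hβ : 0 ≤ β) {m n : ℕ} (hm : 1 ≤ m) (hmn : m ≤ n) :
    ℓ n ^ β ≤ ℓ m ^ β :=
  Real.rpow_le_rpow (hℓ.pos n (hm.trans hmn)).le (hℓ.anti m n hm hmn) hβ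

theorem antitone_rpow_succ (hβ : 0 ≤ β) : Antitone fun n => ℓ (n + 1) ^ β :=
  fun _ _ hmn => hℓ.rpow_le_rpow_of_le hβ (Nat.le_add_left 1 _) (Nat.add_le_add_right hmn 1)

theorem tendsto_rpow (hβ : 0 < β) : Tendsto (fun n => ℓ n ^ β) atTop (𝓝 0) := by
  simpa only [Real.zero_rpow hβ.ne'] using hℓ.tendsto_zero.rpow_const (Or.inr hβ.le)

theorem tendsto_rpow_succ (hβ : 0 < β) : Tendsto (fun n => ℓ (n + 1) ^ β) atTop (𝓝 0) :=
  (hℓ.tendsto_rpow hβ).comp (tendsto_add_atTop_nat 1)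

theorem summable_tailSum (hβ : 0 < β) {t : ℝ} (ht : 0 < t) :
    Summable fun n => if 1 ≤ n ∧ t ≤ ℓ n ^ β then ℓ n else 0 := by
  obtain ⟨N, hN⟩ := eventually_atTop.1 ((hℓ.tendsto_rpow hβ).eventually_lt_const ht)
  refine summable_of_ne_finset_zero (s := range N) fun n hn => if_neg fun h => ?_
  exact (hN n (not_lt.1 (mem_range.not.1 hn))).not_ge h.2

theorem antitoneOn_tailSum (hβ : 0 < β) : AntitoneOn (tailSum ℓ β) (Set.Ioi 0) := by
  intro s hs t ht hst
  refine (hℓ.summable_tailSum hβ ht).tsum_le_tsum (fun n => ?_) (hℓ.summable_tailSum hβ hs)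
  split_ifs with h₁ h₂ h₂
  exacts [le_rfl, absurd ⟨h₁.1, hst.trans h₁.2⟩ h₂, (hℓ.pos n h₂.1).le, le_rfl]

theorem tailSum_eq_sum_Icc (hβ : 0 ≤ β) {n : ℕ} {t : ℝ}
    (ht : t ∈ Set.Ioc (ℓ (n + 1) ^ β) (ℓ n ^ β)) : tailSum ℓ β t = ∑ k ∈ Icc 1 n, ℓ k := by
  have hmem : ∀ k, (1 ≤ k ∧ t ≤ ℓ k ^ β) ↔ k ∈ Finset.Icc 1 n := fun k => by
    rw [Finset.mem_Icc]
    refine and_congr_right fun hk => ⟨fun hkt => not_lt.1 fun hnk => ?_,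
      fun hkn => ht.2.trans (hℓ.rpow_le_rpow_of_le hβ hk hkn)⟩
    linarith [ht.1, hℓ.rpow_le_rpow_of_le hβ (Nat.le_add_left 1 n) hnk]
  rw [tailSum, tsum_eq_sum (s := Icc 1 n) fun k hk => if_neg ((hmem k).not.2 hk),
    ← sum_filter]
  exact sum_congr (by ext k; simp [hmem k]) fun _ _ => rfl

theorem lintegral_exp_tailSum (hβ : 0 < β) :
    ∫⁻ t in Set.Ioc 0 (ℓ 1 ^ β), ENNReal.ofReal (exp (tailSum ℓ β t)) =
      ∑' n, ENNReal.ofReal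
        (exp (∑ k ∈ Icc 1 (n + 1), ℓ k) * (ℓ (n + 1) ^ β - ℓ (n + 1 + 1) ^ β)) := by
  rw [lintegral_Ioc_eq_tsum_of_antitone (hℓ.antitone_rpow_succ hβ.le) (hℓ.tendsto_rpow_succ hβ)]
  refine tsum_congr fun n => ?_
  rw [setLIntegral_congr_fun measurableSet_Ioc fun t ht => by
      rw [hℓ.tailSum_eq_sum_Icc hβ.le ht],
    setLIntegral_const, Real.volume_Ioc, ← ENNReal.ofReal_mul (exp_nonneg _)]

end LengthSeq

open MeasureTheory in
/-- Lemma 2.1: for `β > 0` and any `b > 0`,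
`∫₀^b exp (Σ_{n : ℓ_n^β ≥ t} ℓ_n) dt < ∞` iff `Σ_{n≥1} e^{ℓ_1+⋯+ℓ_n}/n^{1+β} < ∞`. -/
theorem integral_exp_tailSum_finite_iff_coverSeries_summable
    (ℓ : ℕ → ℝ) (hℓ : LengthSeq ℓ) (hθ : ThetaCond ℓ) (β : ℝ) (hβ : 0 < β) :
    ∀ b : ℝ, 0 < b →
      ((∫⁻ t in Set.Ioc (0 : ℝ) b, ENNReal.ofReal (Real.exp (tailSum ℓ β t))) < ⊤ ↔
        coverSeriesSummable ℓ β) := by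
  intro b hb
  have hexp_mono : Monotone fun n => exp (∑ k ∈ Icc 1 (n + 1), ℓ k) :=
    monotone_nat_of_le_succ fun n => exp_le_exp.2 <| by
      rw [sum_Icc_succ_top (Nat.le_add_left 1 (n + 1))]
      linarith [hℓ.pos (n + 1 + 1) (Nat.le_add_left 1 _)]
  have hanti : AntitoneOn (fun t => exp (tailSum ℓ β t)) (Set.Ioi 0) :=
    exp_monotone.comp_antitoneOn (hℓ.antitoneOn_tailSum hβ)
  rw [lintegral_Ioc_lt_top_iff_of_antitoneOn hanti hb (rpow_pos_of_pos (hℓ.pos 1 le_rfl) β),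
    hℓ.lintegral_exp_tailSum hβ,
    tsum_ofReal_lt_top_iff_summable fun n => mul_nonneg (exp_nonneg _)
      (sub_nonneg.2 (hℓ.antitone_rpow_succ hβ.le n.le_succ)),
    summable_mul_sub_succ_iff_summable_sub_mul_succ hexp_mono (exp_nonneg _)
      (hℓ.antitone_rpow_succ hβ.le) (hℓ.tendsto_rpow_succ hβ),
    ← hθ.summable_iff_coverSeriesSummable]
  refine (summable_congr fun n => ?_).trans (summable_nat_add_iff 2)
  rw [sum_Icc_succ_top (Nat.le_add_left 1 (n + 1)), exp_sub_exp_eq_mul_one_sub_exp_neg, mul_assoc]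

end
end

section
/- Let {ℓ_n}_{n≥1} be a decreasing sequence of positive reals tending to 0 satisfying condition (Θ), and set u_n := ∏_{k=1}^n (1 − ℓ_k). Then sup{ β : liminf_n n^β u_n < ∞ } ≥ inf{ β : Σ_{n=1}^∞ e^{ℓ_1+ℓ_2+⋯+ℓ_n} / n^{1+β} < ∞ } = limsup_n (ℓ_1+ℓ_2+⋯+ℓ_n) / log n. -/
open Filter Set

noncomputable section

/-!
The bridge between all three quantities is the partial sum `S n = ℓ₁ + ⋯ + ℓₙ`.
If `S n ≤ (β - ε) log n` eventually, the terms of the series are `O(n^{-1-ε})`.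
Conversely, since `S` is monotone, the `n` terms with index in `(n, 2n]` are each
`≳ e^{S n} / n^{1+β}`, so summability forces `e^{S n} = O(n^β)` and hence
`limsup S n / log n ≤ β`. Finally `u n ≤ e^{-S n}`, so `n^β u n ≤ 1` whenever
`S n ≥ β log n`, which happens infinitely often for every `β` below the limsup.
-/

open Real

namespace EReal

lemma sInf_coe_setOf_eq {P : ℝ → Prop} {L : EReal} (hlt : ∀ β : ℝ, L < β → P β)
    (hle : ∀ β : ℝ, P β → L ≤ β) : sInf {b : EReal | ∃ β : ℝ, b = β ∧ P β} = L :=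
  le_antisymm (le_of_forall_lt_iff_le.1 fun z hz => sInf_le ⟨z, rfl, hlt z hz⟩)
    (le_sInf <| by rintro _ ⟨β, rfl, hβ⟩; exact hle β hβ)

lemma le_sSup_coe_setOf {Q : ℝ → Prop} {L : EReal} (hlt : ∀ β : ℝ, β < L → Q β) :
    L ≤ sSup {b : EReal | ∃ β : ℝ, b = β ∧ Q β} :=
  ge_of_forall_gt_iff_ge.1 fun z hz => le_sSup ⟨z, rfl, hlt z hz⟩

end EReal

lemma rpow_le_max_two_rpow_mul {x y : ℝ} (hx : 0 < x) (hxy : x ≤ y) (hy : y ≤ 2 * x) (p : ℝ) :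
    y ^ p ≤ max (2 ^ p) 1 * x ^ p := by
  rcases le_or_gt 0 p with hp | hp
  · calc y ^ p ≤ (2 * x) ^ p := rpow_le_rpow (hx.le.trans hxy) hy hp
      _ = 2 ^ p * x ^ p := mul_rpow zero_le_two hx.le
      _ ≤ max (2 ^ p) 1 * x ^ p := by gcongr; exact le_max_left _ _
  · calc y ^ p ≤ x ^ p := rpow_le_rpow_of_nonpos hx hxy hp.le
      _ ≤ max (2 ^ p) 1 * x ^ p := le_mul_of_one_le_left (by positivity) (le_max_right _ _)

section PartialSums

variable {S : ℕ → ℝ} {β : ℝ}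

lemma summable_exp_div_rpow_of_eventually_le {ε : ℝ} (hε : 0 < ε)
    (h : ∀ᶠ n : ℕ in atTop, S n ≤ (β - ε) * log n) :
    Summable fun n : ℕ => exp (S n) / (n : ℝ) ^ (1 + β) := by
  refine Summable.of_norm_bounded_eventually_nat (g := fun n : ℕ => (n : ℝ) ^ (-(1 + ε)))
    (summable_nat_rpow.2 (by linarith)) ?_
  filter_upwards [h, eventually_ge_atTop 1] with n hS hn1
  have hn : (0 : ℝ) < n := by exact_mod_cast hn1
  have hexp : exp (S n) ≤ (n : ℝ) ^ (β - ε) := by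
    rw [rpow_def_of_pos hn, mul_comm]
    exact exp_le_exp.2 hS
  calc ‖exp (S n) / (n : ℝ) ^ (1 + β)‖ = exp (S n) / (n : ℝ) ^ (1 + β) :=
        Real.norm_of_nonneg (by positivity)
    _ ≤ (n : ℝ) ^ (β - ε) / (n : ℝ) ^ (1 + β) := by gcongr
    _ = (n : ℝ) ^ (-(1 + ε)) := by rw [← rpow_sub hn]; ring_nf

lemma exists_exp_le_mul_rpow_of_summable (hS : Monotone S)
    (h : Summable fun n : ℕ => exp (S n) / (n : ℝ) ^ (1 + β)) :
    ∃ D : ℝ, ∀ n : ℕ, 1 ≤ n → exp (S n) ≤ D * (n : ℝ) ^ β := by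
  set f : ℕ → ℝ := fun n => exp (S n) / (n : ℝ) ^ (1 + β)
  set K : ℝ := max (2 ^ (1 + β)) 1
  refine ⟨(∑' n, f n) * K, fun n hn1 => ?_⟩
  have hn : (0 : ℝ) < n := by exact_mod_cast hn1
  have hblock : ∀ m ∈ Finset.Ioc n (2 * n), exp (S n) / (K * (n : ℝ) ^ (1 + β)) ≤ f m := by
    intro m hm
    obtain ⟨hnm, hm2n⟩ := Finset.mem_Ioc.1 hm
    have hnm : (n : ℝ) ≤ m := by exact_mod_cast hnm.le
    have hm2n : (m : ℝ) ≤ 2 * n := by exact_mod_cast hm2n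
    have hm : (0 : ℝ) < m := hn.trans_le hnm
    exact div_le_div₀ (exp_pos _).le (exp_le_exp.2 (hS (Nat.cast_le.1 hnm)))
      (rpow_pos_of_pos hm _) (rpow_le_max_two_rpow_mul hn hnm hm2n _)
  have hcard : (Finset.Ioc n (2 * n)).card = n := by rw [Nat.card_Ioc]; omega
  have hsum := (Finset.card_nsmul_le_sum _ f _ hblock).trans
    (h.sum_le_tsum _ fun m _ => by positivity)
  rw [hcard, nsmul_eq_mul] at hsum
  have hterm : (n : ℝ) * (exp (S n) / (K * (n : ℝ) ^ (1 + β))) = exp (S n) / (K * (n : ℝ) ^ β) := by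
    rw [rpow_add hn, rpow_one]
    field_simp
  rw [hterm, div_le_iff₀ (by positivity)] at hsum
  linarith

lemma summable_exp_div_rpow_of_limsup_lt
    (h : limsup (fun n : ℕ => ((S n / log n : ℝ) : EReal)) atTop < β) :
    Summable fun n : ℕ => exp (S n) / (n : ℝ) ^ (1 + β) := by
  obtain ⟨γ, hLγ, hγβ⟩ := EReal.lt_iff_exists_real_btwn.1 h
  refine summable_exp_div_rpow_of_eventually_le (ε := β - γ) (sub_pos.2 (EReal.coe_lt_coe_iff.1 hγβ)) ?_
  filter_upwards [eventually_lt_of_limsup_lt hLγ, eventually_ge_atTop 2] with n hlt hn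
  have hlog : 0 < log n := log_pos (by exact_mod_cast hn)
  rw [sub_sub_cancel, ← div_le_iff₀ hlog]
  exact_mod_cast hlt.le

lemma limsup_le_of_summable_exp_div_rpow (hS : Monotone S)
    (h : Summable fun n : ℕ => exp (S n) / (n : ℝ) ^ (1 + β)) :
    limsup (fun n : ℕ => ((S n / log n : ℝ) : EReal)) atTop ≤ β := by
  obtain ⟨D, hD⟩ := exists_exp_le_mul_rpow_of_summable hS h
  refine EReal.le_of_forall_lt_iff_le.1 fun z hz => limsup_le_of_le (by isBoundedDefault) ?_
  have hpow : Tendsto (fun n : ℕ => (n : ℝ) ^ (z - β)) atTop atTop :=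
    (tendsto_rpow_atTop (sub_pos.2 (by exact_mod_cast hz))).comp tendsto_natCast_atTop_atTop
  filter_upwards [hpow.eventually_ge_atTop D, eventually_ge_atTop 2] with n hDn hn
  have hn1 : (1 : ℝ) < n := by exact_mod_cast hn
  have hn0 : (0 : ℝ) < n := one_pos.trans hn1
  have hexp : exp (S n) ≤ exp (z * log n) := calc
    exp (S n) ≤ D * (n : ℝ) ^ β := hD n (by omega)
    _ ≤ (n : ℝ) ^ (z - β) * (n : ℝ) ^ β := by gcongr
    _ = exp (z * log n) := by rw [← rpow_add hn0, sub_add_cancel, rpow_def_of_pos hn0, mul_comm]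
  have hle : S n / log n ≤ z := (div_le_iff₀ (log_pos hn1)).2 (exp_le_exp.1 hexp)
  exact_mod_cast hle

lemma frequently_mul_log_le_of_lt_limsup
    (h : (β : EReal) < limsup (fun n : ℕ => ((S n / log n : ℝ) : EReal)) atTop) :
    ∃ᶠ n : ℕ in atTop, β * log n ≤ S n := by
  refine ((frequently_lt_of_lt_limsup (by isBoundedDefault) h).and_eventually
    (eventually_ge_atTop 2)).mono fun n ⟨hlt, hn⟩ => ?_
  have hlt' : β < S n / log n := by exact_mod_cast hlt
  exact ((lt_div_iff₀ (log_pos (by exact_mod_cast hn))).1 hlt').le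

lemma liminf_ofReal_rpow_mul_lt_top {u : ℕ → ℝ} (hu : ∀ n, u n ≤ exp (-S n))
    (h : ∃ᶠ n : ℕ in atTop, β * log n ≤ S n) :
    liminf (fun n : ℕ => ENNReal.ofReal ((n : ℝ) ^ β * u n)) atTop < ⊤ := by
  refine (liminf_le_of_frequently_le' (x := 1) ?_).trans_lt ENNReal.one_lt_top
  refine (h.and_eventually (eventually_ge_atTop 1)).mono fun n ⟨hS, hn1⟩ => ?_
  have hn : (0 : ℝ) < n := by exact_mod_cast hn1
  rw [← ENNReal.ofReal_one]
  refine ENNReal.ofReal_le_ofReal ?_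
  calc (n : ℝ) ^ β * u n ≤ exp (β * log n) * exp (-S n) := by
        rw [rpow_def_of_pos hn, mul_comm (log n)]
        gcongr
        exact hu n
    _ = exp (β * log n - S n) := by rw [← exp_add, sub_eq_add_neg]
    _ ≤ 1 := exp_le_one_iff.2 (by linarith)

end PartialSums

lemma partProd_le_exp_neg_sum {ℓ : ℕ → ℝ} (h : ∀ k, 1 ≤ k → ℓ k ≤ 1) (n : ℕ) :
    partProd ℓ n ≤ exp (-∑ k ∈ Finset.Icc 1 n, ℓ k) := by
  rw [← Finset.sum_neg_distrib, exp_sum]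
  refine Finset.prod_le_prod (fun k hk => sub_nonneg.2 (h k (Finset.mem_Icc.1 hk).1))
    fun k _ => ?_
  linarith [add_one_le_exp (-ℓ k)]

namespace LengthSeq

variable {ℓ : ℕ → ℝ}

lemma le_one (hℓ : LengthSeq ℓ) (k : ℕ) (hk : 1 ≤ k) : ℓ k ≤ 1 := by
  linarith [hℓ.anti 1 k le_rfl hk, hℓ.first_le]

lemma monotone_sum (hℓ : LengthSeq ℓ) : Monotone fun n => ∑ k ∈ Finset.Icc 1 n, ℓ k :=
  fun _ _ hmn => Finset.sum_le_sum_of_subset_of_nonneg (Finset.Icc_subset_Icc_right hmn)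
    fun k hk _ => (hℓ.pos k (Finset.mem_Icc.1 hk).1).le

end LengthSeq

theorem sup_liminf_ge_inf_coverSeries_eq_limsup_general
    (ℓ : ℕ → ℝ) (hℓ : LengthSeq ℓ) :
    (sInf {b : EReal | ∃ β : ℝ, b = (β : EReal) ∧ coverSeriesSummable ℓ β}
        ≤ sSup {b : EReal | ∃ β : ℝ, b = (β : EReal) ∧
            Filter.liminf (fun n : ℕ => ENNReal.ofReal ((n : ℝ) ^ β * partProd ℓ n))
              Filter.atTop < ⊤}) ∧
      sInf {b : EReal | ∃ β : ℝ, b = (β : EReal) ∧ coverSeriesSummable ℓ β}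
        = Filter.limsup
            (fun n : ℕ => (((∑ k ∈ Finset.Icc 1 n, ℓ k) / Real.log n : ℝ) : EReal))
            Filter.atTop := by
  have hinf := EReal.sInf_coe_setOf_eq (P := coverSeriesSummable ℓ)
    (fun β => summable_exp_div_rpow_of_limsup_lt)
    (fun β => limsup_le_of_summable_exp_div_rpow hℓ.monotone_sum)
  refine ⟨hinf ▸ EReal.le_sSup_coe_setOf fun β hβ => ?_, hinf⟩
  exact liminf_ofReal_rpow_mul_lt_top (partProd_le_exp_neg_sum hℓ.le_one)
    (frequently_mul_log_le_of_lt_limsup hβ)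

/-- Lemma 2.2:
`sup {β : liminf_n n^β u_n < ∞} ≥ inf {β : Σ_n e^{ℓ_1+⋯+ℓ_n}/n^{1+β} < ∞}`
and the latter infimum equals `limsup_n (ℓ_1+⋯+ℓ_n)/log n` (all in the extended reals). -/
theorem sup_liminf_ge_inf_coverSeries_eq_limsup
    (ℓ : ℕ → ℝ) (hℓ : LengthSeq ℓ) (hθ : ThetaCond ℓ) :
    (sInf {b : EReal | ∃ β : ℝ, b = (β : EReal) ∧ coverSeriesSummable ℓ β}
        ≤ sSup {b : EReal | ∃ β : ℝ, b = (β : EReal) ∧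
            Filter.liminf (fun n : ℕ => ENNReal.ofReal ((n : ℝ) ^ β * partProd ℓ n))
              Filter.atTop < ⊤}) ∧
      sInf {b : EReal | ∃ β : ℝ, b = (β : EReal) ∧ coverSeriesSummable ℓ β}
        = Filter.limsup
            (fun n : ℕ => (((∑ k ∈ Finset.Icc 1 n, ℓ k) / Real.log n : ℝ) : EReal))
            Filter.atTop :=
  sup_liminf_ge_inf_coverSeries_eq_limsup_general ℓ hℓ

end
end

section
/- There exists a constant C > 0 such that for all t ∈ (0,1], all a ∈ [0,1] and all b ∈ (−1/2, 1/2): if Z* is a real normal random variable with mean 0 and variance t, then Σ_{k∈ℤ} P( Z* ∈ (k+b−a, k+b+a) ) ≤ C · P( Z* ∈ (b−a, b+a) ). -/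
open Filter Set

noncomputable section

/-!
Write `I(c)` for the mass of the window `(c - a, c + a)` under a centred Gaussian density `f`.
Since `f` is even and decreasing in `|x|`, `I(c)` depends only on `|c|` and is nonincreasing in
`|c|` (its derivative is `f (c + a) - f (c - a)`); this handles the translates with `|k| ≤ 3`.
For `|k| > 3` compare the density on the two windows pointwise:
`I(k + b) ≤ 2a f(|k + b| - a) ≤ e^{8 - 2|k|} 2a f(|b| + a) ≤ e^{8 - 2|k|} I(b)`, because
`(|b| + a)² - (|k + b| - a)² ≤ 3|k| - k² ≤ 16 - 4|k|` and the variance is at most `1`.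
The weights `e^{8 - 2|k|}` are summable over `ℤ`.
-/

open MeasureTheory ProbabilityTheory Real
open scoped NNReal

section RadialWindow

variable {f : ℝ → ℝ}

lemma integral_window_abs (heven : ∀ y, f (-y) = f y) (c a : ℝ) :
    ∫ x in (|c| - a)..(|c| + a), f x = ∫ x in (c - a)..(c + a), f x := by
  rcases abs_cases c with ⟨hc, -⟩ | ⟨hc, -⟩
  · rw [hc]
  · calc ∫ x in (|c| - a)..(|c| + a), f x = ∫ x in -(c + a)..-(c - a), f x := by
          rw [hc]; congr 1 <;> ring
      _ = ∫ x in (c - a)..(c + a), f x := by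
          simp only [← intervalIntegral.integral_comp_neg, heven]

lemma antitoneOn_integral_window (hf_cont : Continuous f)
    (hf : ∀ y z, |z| ≤ |y| → f y ≤ f z) {a : ℝ} (ha : 0 ≤ a) :
    AntitoneOn (fun c => ∫ x in (c - a)..(c + a), f x) (Ici 0) := by
  have hderiv : ∀ c, HasDerivAt (fun c => ∫ x in (c - a)..(c + a), f x)
      (f (c + a) - f (c - a)) c := by
    intro c
    have hF := fun u => (hf_cont.integral_hasStrictDerivAt 0 u).hasDerivAt
    have := ((hF (c + a)).comp c ((hasDerivAt_id c).add_const a)).sub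
      ((hF (c - a)).comp c ((hasDerivAt_id c).sub_const a))
    simp only [Function.comp_def, id, mul_one] at this
    refine this.congr_of_eventuallyEq (Filter.Eventually.of_forall fun c => ?_)
    exact (intervalIntegral.integral_interval_sub_left (hf_cont.intervalIntegrable _ _)
      (hf_cont.intervalIntegrable _ _)).symm
  refine antitoneOn_of_hasDerivWithinAt_nonpos (convex_Ici 0)
    (fun c _ => (hderiv c).continuousAt.continuousWithinAt)
    (fun c _ => (hderiv c).hasDerivWithinAt) fun c hc => ?_
  rw [interior_Ici, mem_Ioi] at hc
  have habs : |c - a| ≤ |c + a| := by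
    rw [abs_of_pos (by linarith : 0 < c + a)]
    exact abs_sub_le_iff.2 ⟨by linarith, by linarith⟩
  exact sub_nonpos.2 (hf _ _ habs)

lemma integral_window_le_of_abs_le (hf_cont : Continuous f)
    (hf : ∀ y z, |z| ≤ |y| → f y ≤ f z) {a b c : ℝ} (ha : 0 ≤ a) (hbc : |b| ≤ |c|) :
    ∫ x in (c - a)..(c + a), f x ≤ ∫ x in (b - a)..(b + a), f x := by
  have heven : ∀ y, f (-y) = f y := fun y =>
    le_antisymm (hf _ _ (abs_neg y).ge) (hf _ _ (abs_neg y).le)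
  rw [← integral_window_abs heven c, ← integral_window_abs heven b]
  exact antitoneOn_integral_window hf_cont hf ha (abs_nonneg b) (abs_nonneg c) hbc

lemma integral_window_le_two_mul_apply_abs_sub (hf_cont : Continuous f)
    (hf : ∀ y z, |z| ≤ |y| → f y ≤ f z) {a c : ℝ} (ha : 0 ≤ a) (hac : a ≤ |c|) :
    ∫ x in (c - a)..(c + a), f x ≤ 2 * a * f (|c| - a) := by
  calc ∫ x in (c - a)..(c + a), f x ≤ ∫ _ in (c - a)..(c + a), f (|c| - a) :=
        intervalIntegral.integral_mono_on (by linarith) (hf_cont.intervalIntegrable _ _)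
          intervalIntegrable_const fun x hx => hf _ _ <| by
            rw [abs_of_nonneg (sub_nonneg.2 hac)]
            cases abs_cases c <;> cases abs_cases x <;> linarith [hx.1, hx.2]
    _ = 2 * a * f (|c| - a) := by rw [intervalIntegral.integral_const, smul_eq_mul]; ring

lemma two_mul_apply_abs_add_le_integral_window (hf_cont : Continuous f)
    (hf : ∀ y z, |z| ≤ |y| → f y ≤ f z) {a : ℝ} (ha : 0 ≤ a) (c : ℝ) :
    2 * a * f (|c| + a) ≤ ∫ x in (c - a)..(c + a), f x := by
  calc 2 * a * f (|c| + a) = ∫ _ in (c - a)..(c + a), f (|c| + a) := by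
        rw [intervalIntegral.integral_const, smul_eq_mul]; ring
    _ ≤ ∫ x in (c - a)..(c + a), f x :=
        intervalIntegral.integral_mono_on (by linarith) intervalIntegrable_const
          (hf_cont.intervalIntegrable _ _) fun x hx => hf _ _ <| by
            rw [abs_of_nonneg (by positivity : 0 ≤ |c| + a)]
            cases abs_cases c <;> cases abs_cases x <;> linarith [hx.1, hx.2]

end RadialWindow

section Gaussian

variable {v : ℝ≥0}

lemma gaussianPDFReal_zero_eq_exp_mul (v : ℝ≥0) (y z : ℝ) :
    gaussianPDFReal 0 v y = rexp ((z ^ 2 - y ^ 2) / (2 * v)) * gaussianPDFReal 0 v z := by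
  simp only [gaussianPDFReal, sub_zero]
  rw [mul_left_comm, ← exp_add]
  congr 2
  ring

lemma gaussianPDFReal_zero_le_of_abs_le (y z : ℝ) (h : |z| ≤ |y|) :
    gaussianPDFReal 0 v y ≤ gaussianPDFReal 0 v z := by
  rw [gaussianPDFReal_zero_eq_exp_mul v y z]
  refine mul_le_of_le_one_left (gaussianPDFReal_nonneg _ _ _) (exp_le_one_iff.2 ?_)
  have hsq : z ^ 2 ≤ y ^ 2 := sq_le_sq.2 h
  exact div_nonpos_of_nonpos_of_nonneg (by linarith) (by positivity)

lemma gaussianPDFReal_zero_le_exp_mul (hv : v ≤ 1) {y z : ℝ} (h : z ^ 2 ≤ y ^ 2) :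
    gaussianPDFReal 0 v y ≤ rexp ((z ^ 2 - y ^ 2) / 2) * gaussianPDFReal 0 v z := by
  rcases eq_or_ne v 0 with rfl | hv0
  · simp
  rw [gaussianPDFReal_zero_eq_exp_mul v y z]
  have hv2 : (2 : ℝ) * v ≤ 2 := by have : (v : ℝ) ≤ 1 := hv; linarith
  have : (y ^ 2 - z ^ 2) / 2 ≤ (y ^ 2 - z ^ 2) / (2 * v) :=
    div_le_div_of_nonneg_left (by linarith) (by positivity) hv2
  refine mul_le_mul_of_nonneg_right (exp_le_exp.2 ?_) (gaussianPDFReal_nonneg _ _ _)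
  simpa only [← neg_div, neg_sub] using neg_le_neg this

lemma continuous_gaussianPDFReal (μ : ℝ) (v : ℝ≥0) : Continuous (gaussianPDFReal μ v) := by
  unfold gaussianPDFReal; fun_prop

lemma gaussianReal_Ioo_sub_add_eq_ofReal_integral (μ : ℝ) (hv : v ≠ 0) {a : ℝ} (ha : 0 ≤ a)
    (c : ℝ) : gaussianReal μ v (Ioo (c - a) (c + a))
      = ENNReal.ofReal (∫ x in (c - a)..(c + a), gaussianPDFReal μ v x) := by
  rw [gaussianReal_apply_eq_integral _ hv, intervalIntegral.integral_of_le (by linarith),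
    integral_Ioc_eq_integral_Ioo]

lemma integral_gaussianPDFReal_window_le_exp_mul (hv : v ≤ 1) {a b c n : ℝ} (ha₀ : 0 ≤ a)
    (ha₁ : a ≤ 1) (hb : |b| ≤ 1 / 2) (hn : 3 < n) (hc : n - 1 / 2 ≤ |c|) :
    ∫ x in (c - a)..(c + a), gaussianPDFReal 0 v x
      ≤ rexp (8 - 2 * n) * ∫ x in (b - a)..(b + a), gaussianPDFReal 0 v x := by
  have hcont := continuous_gaussianPDFReal 0 v
  have hrad := gaussianPDFReal_zero_le_of_abs_le (v := v)
  have hac : a ≤ |c| := by linarith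
  have hz : (|b| + a) ^ 2 ≤ (3 / 2) ^ 2 := by gcongr; linarith
  have hy : (n - 3 / 2) ^ 2 ≤ (|c| - a) ^ 2 := pow_le_pow_left₀ (by linarith) (by linarith) 2
  have hsq : (|b| + a) ^ 2 ≤ (|c| - a) ^ 2 := by nlinarith
  have hdecay : ((|b| + a) ^ 2 - (|c| - a) ^ 2) / 2 ≤ 8 - 2 * n := by
    nlinarith [sq_nonneg (n - 7 / 2)]
  calc _ ≤ 2 * a * gaussianPDFReal 0 v (|c| - a) :=
        integral_window_le_two_mul_apply_abs_sub hcont hrad ha₀ hac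
    _ ≤ 2 * a * (rexp (8 - 2 * n) * gaussianPDFReal 0 v (|b| + a)) := by
        gcongr
        exact (gaussianPDFReal_zero_le_exp_mul hv hsq).trans <|
          mul_le_mul_of_nonneg_right (exp_le_exp.2 hdecay) (gaussianPDFReal_nonneg _ _ _)
    _ = rexp (8 - 2 * n) * (2 * a * gaussianPDFReal 0 v (|b| + a)) := by ring
    _ ≤ _ := by gcongr; exact two_mul_apply_abs_add_le_integral_window hcont hrad ha₀ b

lemma integral_gaussianPDFReal_window_translate_le (hv : v ≤ 1) {a b : ℝ} (ha₀ : 0 ≤ a)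
    (ha₁ : a ≤ 1) (hb : |b| ≤ 1 / 2) (k : ℤ) :
    ∫ x in ((k : ℝ) + b - a)..((k : ℝ) + b + a), gaussianPDFReal 0 v x
      ≤ rexp (8 - 2 * |(k : ℝ)|) * ∫ x in (b - a)..(b + a), gaussianPDFReal 0 v x := by
  have hkb : |(k : ℝ)| - 1 / 2 ≤ |(k : ℝ) + b| := by
    have := abs_sub_abs_le_abs_sub (k : ℝ) (-b)
    rw [sub_neg_eq_add, abs_neg] at this
    linarith
  rcases le_or_gt |(k : ℝ)| 3 with hk | hk
  · have hbk : |b| ≤ |(k : ℝ) + b| := by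
      rcases eq_or_ne k 0 with rfl | hk0
      · simp
      · have : (1 : ℝ) ≤ |(k : ℝ)| := by
          rw [← Int.cast_abs]; exact_mod_cast Int.one_le_abs hk0
        linarith
    calc _ ≤ ∫ x in (b - a)..(b + a), gaussianPDFReal 0 v x :=
          integral_window_le_of_abs_le (continuous_gaussianPDFReal 0 v)
            gaussianPDFReal_zero_le_of_abs_le ha₀ hbk
      _ ≤ _ := le_mul_of_one_le_left
          (intervalIntegral.integral_nonneg (by linarith) fun x _ => gaussianPDFReal_nonneg _ _ _)
          (one_le_exp (by linarith))
  · exact integral_gaussianPDFReal_window_le_exp_mul hv ha₀ ha₁ hb hk hkb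

end Gaussian

lemma summable_exp_sub_mul_abs_int (c : ℝ) {r : ℝ} (hr : 0 < r) :
    Summable fun k : ℤ => rexp (c - r * |(k : ℝ)|) := by
  have h : Summable fun n : ℕ => rexp (c - r * n) := by
    refine ((summable_exp_nat_mul_iff.2 (neg_lt_zero.2 hr)).mul_left (rexp c)).congr fun n => ?_
    rw [← exp_add]
    ring_nf
  exact .of_nat_of_neg (by simpa using h) (by simpa using h)

open MeasureTheory ProbabilityTheory in
/-- Lemma 2.3: there is a constant `C > 0` such that for all `t ∈ (0,1]`, `a ∈ [0,1]` and
`b ∈ (-1/2, 1/2)`, if `Z*` is a centered normal random variable of variance `t`, then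
`Σ_{k ∈ ℤ} P(Z* ∈ (k+b-a, k+b+a)) ≤ C · P(Z* ∈ (b-a, b+a))`. -/
theorem gaussian_interval_translates_sum_le :
    ∃ C : NNReal, 0 < C ∧
      ∀ t ∈ Set.Ioc (0 : ℝ) 1, ∀ a ∈ Set.Icc (0 : ℝ) 1,
        ∀ b ∈ Set.Ioo (-(1 / 2) : ℝ) (1 / 2),
          (∑' k : ℤ,
              gaussianReal 0 (Real.toNNReal t)
                (Set.Ioo ((k : ℝ) + b - a) ((k : ℝ) + b + a)))
            ≤ (C : ENNReal) * gaussianReal 0 (Real.toNNReal t) (Set.Ioo (b - a) (b + a)) := by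
  have hsum := summable_exp_sub_mul_abs_int 8 two_pos
  refine ⟨(∑' k : ℤ, rexp (8 - 2 * |(k : ℝ)|)).toNNReal,
    Real.toNNReal_pos.2 (hsum.tsum_pos (fun _ => (exp_pos _).le) 0 (exp_pos _)), ?_⟩
  rintro t ⟨ht₀, ht₁⟩ a ⟨ha₀, ha₁⟩ b ⟨hb₀, hb₁⟩
  have hv₀ : t.toNNReal ≠ 0 := (Real.toNNReal_pos.2 ht₀).ne'
  have hv₁ : t.toNNReal ≤ 1 := Real.toNNReal_le_one.2 ht₁
  have hb : |b| ≤ 1 / 2 := abs_le.2 ⟨hb₀.le, hb₁.le⟩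
  simp only [gaussianReal_Ioo_sub_add_eq_ofReal_integral 0 hv₀ ha₀]
  calc _ ≤ ∑' k : ℤ, ENNReal.ofReal (rexp (8 - 2 * |(k : ℝ)|)) *
        ENNReal.ofReal (∫ x in (b - a)..(b + a), gaussianPDFReal 0 t.toNNReal x) :=
        ENNReal.tsum_le_tsum fun k => (ENNReal.ofReal_le_ofReal
          (integral_gaussianPDFReal_window_translate_le hv₁ ha₀ ha₁ hb k)).trans_eq
          (ENNReal.ofReal_mul (exp_pos _).le)
    _ = _ := by
        rw [ENNReal.tsum_mul_right,
          ← ENNReal.ofReal_tsum_of_nonneg (fun _ => (exp_pos _).le) hsum]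
        rfl
end
end
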